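/- (Observational outcome-regression identification.) Under treatment ignorability, monotonicity, principal ignorability and positivity, for every z ∈ {1,...,J} and every g ∈ {J−z+1,...,J}: E[Y_z·1(G=g)] = E[(1(Z=J−g+1)·S/π_{J−g+1}(X) − 1(Z=J−g)·S/π_{J−g}(X))·m_z(X)], where for g = J the term 1(Z=0)·S/π_0(X) is taken to be 0. -/

import Mathlib

/-!
Under monotonicity the survival indicators of a unit form a threshold pattern, `S_w = 1` exactly
when `w > J - G`. Hence `S_z = ∑_{g > J - z} 1(G = g)` and `1(G = g) = S_{J-g+1} - S_{J-g}`.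
Treatment ignorability turns the defining identity of `m_z` into `m_z p_z = E[Y_z S_z | X]`, and
principal ignorability makes `E[Y_z 1(G = g) | X]` proportional to `e_g(X)` over the strata that
add up to `S_z`; together, `E[Y_z 1(G = g) | X] = m_z (p_{J-g+1} - p_{J-g})`. Finally
`E[m_z p_w] = E[1(Z = w) S m_z / π_w]`, again by treatment ignorability.
-/

open MeasureTheory ProbabilityTheory

noncomputable section

namespace TruncationByDeath

variable {Ω : Type*} {𝒳 : Type*} [MeasurableSpace Ω] [MeasurableSpace 𝒳]

/-- The σ-algebra on `Ω` generated by the covariate map `X`. -/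
def mX (X : Ω → 𝒳) : MeasurableSpace Ω := MeasurableSpace.comap X inferInstance

/-- Real-valued indicator of the event `{Z = z}`. -/
def indic (Z : Ω → ℕ) (z : ℕ) : Ω → ℝ := fun ω => if Z ω = z then 1 else 0

/-- Observed survival status `S := ∑_z 1(Z=z) ⬝ S_z`. -/
def Sobs (J : ℕ) (Z : Ω → ℕ) (S : ℕ → Ω → ℝ) : Ω → ℝ :=
  fun ω => ∑ z ∈ Finset.Icc 1 J, indic Z z ω * S z ω

/-- Observed outcome `Y := ∑_z 1(Z=z) ⬝ Y_z`. -/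
def Yobs (J : ℕ) (Z : Ω → ℕ) (Y : ℕ → Ω → ℝ) : Ω → ℝ :=
  fun ω => ∑ z ∈ Finset.Icc 1 J, indic Z z ω * Y z ω

/-- Principal score `p_z(X) := E[S_z | σ(X)]`, with conventions `p_0 := 0` and `p_{J+1} := 1`. -/
def pscore (P : Measure Ω) (X : Ω → 𝒳) (S : ℕ → Ω → ℝ) (J : ℕ) (z : ℕ) : Ω → ℝ :=
  if z = 0 then fun _ => 0 else if z = J + 1 then fun _ => 1 else P[S z | mX X]

/-- Treatment probability `π_z := P(Z = z)`. -/
def piZ (P : Measure Ω) (Z : Ω → ℕ) (z : ℕ) : ℝ := (P {ω | Z ω = z}).toReal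

/-- Principal stratum variable `G := ∑_{z=1}^J S_z`. -/
def Gsum (J : ℕ) (S : ℕ → Ω → ℝ) : Ω → ℝ := fun ω => ∑ z ∈ Finset.Icc 1 J, S z ω

/-- Real-valued indicator of the event `{G = g}`. -/
def indG (J : ℕ) (S : ℕ → Ω → ℝ) (g : ℕ) : Ω → ℝ :=
  Set.indicator {ω | Gsum J S ω = (g : ℝ)} (fun _ => (1 : ℝ))

/-- Principal score of the stratum `g` : `e_g(X) := E[1(G=g) | σ(X)]`. -/
def eg (P : Measure Ω) (X : Ω → 𝒳) (J : ℕ) (S : ℕ → Ω → ℝ) (g : ℕ) : Ω → ℝ :=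
  P[indG J S g | mX X]

/-- Basic setup: measurability, ranges, values and integrability of the primitives. -/
structure Setup (P : Measure Ω) (J : ℕ) (X : Ω → 𝒳) (Z : Ω → ℕ)
    (S Y : ℕ → Ω → ℝ) : Prop where
  hJ : 2 ≤ J
  hX : Measurable X
  hZ : Measurable Z
  hZr : ∀ ω, Z ω ∈ Finset.Icc 1 J
  hSm : ∀ z, Measurable (S z)
  hS01 : ∀ z ω, S z ω = 0 ∨ S z ω = 1
  hYm : ∀ z, Measurable (Y z)
  hYint : ∀ z, Integrable (Y z) P

/-- Randomization : `Z` is independent of `(X, S_1,…,S_J, Y_1,…,Y_J)` and `π_z > 0` for all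
`z ∈ {1,…,J}`. -/
def Randomization (P : Measure Ω) (J : ℕ) (X : Ω → 𝒳) (Z : Ω → ℕ)
    (S Y : ℕ → Ω → ℝ) : Prop :=
  IndepFun Z (fun ω => (X ω, fun z => S z ω, fun z => Y z ω)) P ∧
    ∀ z ∈ Finset.Icc 1 J, 0 < piZ P Z z

/-- Monotonicity : `S_{z'} ≤ S_z` a.s. whenever `z' ≤ z`. -/
def Monotonicity (P : Measure Ω) (J : ℕ) (S : ℕ → Ω → ℝ) : Prop :=
  ∀ z ∈ Finset.Icc 1 J, ∀ z' ∈ Finset.Icc 1 J, z' ≤ z → ∀ᵐ ω ∂P, S z' ω ≤ S z ω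

/-- Principal ignorability. -/
def PrincipalIgnorability (P : Measure Ω) (J : ℕ) (X : Ω → 𝒳)
    (S Y : ℕ → Ω → ℝ) : Prop :=
  ∀ z ∈ Finset.Icc 1 J, ∀ g ∈ Finset.Icc (J - z + 1) J, ∀ g' ∈ Finset.Icc (J - z + 1) J,
    (fun ω => (P[fun ω' => Y z ω' * indG J S g ω' | mX X]) ω * eg P X J S g' ω)
      =ᵐ[P] fun ω => (P[fun ω' => Y z ω' * indG J S g' ω' | mX X]) ω * eg P X J S g ω

/-- Positivity : the principal scores are uniformly bounded away from zero. -/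
def Positivity (P : Measure Ω) (J : ℕ) (X : Ω → 𝒳) (S : ℕ → Ω → ℝ) : Prop :=
  ∃ c : ℝ, 0 < c ∧ ∀ z ∈ Finset.Icc 1 J, ∀ᵐ ω ∂P, c ≤ pscore P X S J z ω

/-- Basic setup with bounded potential outcomes (observational setting). -/
structure SetupB (P : Measure Ω) (J : ℕ) (X : Ω → 𝒳) (Z : Ω → ℕ)
    (S Y : ℕ → Ω → ℝ) : Prop where
  hJ : 2 ≤ J
  hX : Measurable X
  hZ : Measurable Z
  hZr : ∀ ω, Z ω ∈ Finset.Icc 1 J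
  hSm : ∀ z, Measurable (S z)
  hS01 : ∀ z ω, S z ω = 0 ∨ S z ω = 1
  hYm : ∀ z, Measurable (Y z)
  hYbd : ∃ C, ∀ z ω, |Y z ω| ≤ C

/-- Generalized propensity score `π_z(X) := E[1(Z=z) | σ(X)]`. -/
def piX (P : Measure Ω) (X : Ω → 𝒳) (Z : Ω → ℕ) (z : ℕ) : Ω → ℝ :=
  P[indic Z z | mX X]

/-- Treatment ignorability in the observational setting: the generalized propensity scores
are bounded away from zero, and conditionally on `σ(X)` the treatment indicator factorizes
from any bounded measurable functional of the potential values. -/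
def TreatmentIgnorability (P : Measure Ω) (J : ℕ) (X : Ω → 𝒳) (Z : Ω → ℕ)
    (S Y : ℕ → Ω → ℝ) : Prop :=
  (∃ c : ℝ, 0 < c ∧ ∀ z ∈ Finset.Icc 1 J, ∀ᵐ ω ∂P, c ≤ piX P X Z z ω) ∧
  ∀ z ∈ Finset.Icc 1 J, ∀ φ : (ℕ → ℝ) → (ℕ → ℝ) → ℝ,
    Measurable (Function.uncurry φ) → (∃ C, ∀ s y, |φ s y| ≤ C) →
    P[fun ω => indic Z z ω * φ (fun w => S w ω) (fun w => Y w ω) | mX X]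
      =ᵐ[P] fun ω => piX P X Z z ω
        * (P[fun ω' => φ (fun w => S w ω') (fun w => Y w ω') | mX X]) ω

open Finset

section Pointwise

variable {α : Type*} {J : ℕ}

lemma exists_threshold_of_monotone {s : ℕ → ℝ} (h01 : ∀ w, s w = 0 ∨ s w = 1)
    (hmono : ∀ w ∈ Icc 1 J, ∀ w' ∈ Icc 1 J, w' ≤ w → s w' ≤ s w) :
    ∃ n ≤ J, ∑ w ∈ Icc 1 J, s w = n ∧ ∀ w ∈ Icc 1 J, s w = if J < n + w then 1 else 0 := by
  set T := {w ∈ Icc 1 J | s w = 1}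
  have hs : ∀ w, s w = if s w = 1 then 1 else 0 := fun w => by
    rcases h01 w with h | h <;> rw [h] <;> norm_num
  refine ⟨#T, by simpa using card_filter_le (Icc 1 J) _, ?_, fun w hw => ?_⟩
  · rw [sum_congr rfl fun w _ => hs w, sum_boole]
  obtain ⟨hw1, hwJ⟩ := mem_Icc.1 hw
  rcases h01 w with h | h
  · have hT : T ⊆ Icc (w + 1) J := fun w' hw' => by
      obtain ⟨hw'I, hw'1⟩ := mem_filter.1 hw'
      have hle := mem_Icc.1 hw'I
      by_contra hlt
      have := hmono w hw w' hw'I (by rw [mem_Icc] at hlt; omega)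
      linarith
    have := card_le_card hT
    rw [Nat.card_Icc] at this
    rw [h, if_neg (by omega)]
  · have hT : Icc w J ⊆ T := fun w' hw' => by
      obtain ⟨h1, h2⟩ := mem_Icc.1 hw'
      have hw'I : w' ∈ Icc 1 J := mem_Icc.2 ⟨by omega, h2⟩
      have := hmono w' hw'I w hw h1
      refine mem_filter.2 ⟨hw'I, ?_⟩
      rcases h01 w' with h' | h'
      · linarith
      · exact h'
    have := card_le_card hT
    rw [Nat.card_Icc] at this
    rw [h, if_pos (by omega)]

lemma sum_ite_sum_eq_of_monotone {s : ℕ → ℝ} (h01 : ∀ w, s w = 0 ∨ s w = 1)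
    (hmono : ∀ w ∈ Icc 1 J, ∀ w' ∈ Icc 1 J, w' ≤ w → s w' ≤ s w) {z : ℕ} (hz : z ∈ Icc 1 J) :
    ∑ g ∈ Icc (J - z + 1) J, (if ∑ w ∈ Icc 1 J, s w = g then 1 else 0 : ℝ) = s z := by
  obtain ⟨n, hnJ, hsum, hs⟩ := exists_threshold_of_monotone h01 hmono
  simp only [hsum, Nat.cast_inj, sum_ite_eq, hs z hz, mem_Icc]
  rw [mem_Icc] at hz
  split_ifs <;> first | rfl | (exfalso; omega)

lemma ite_sum_eq_sub_of_monotone {s : ℕ → ℝ} (h01 : ∀ w, s w = 0 ∨ s w = 1)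
    (hmono : ∀ w ∈ Icc 1 J, ∀ w' ∈ Icc 1 J, w' ≤ w → s w' ≤ s w) {g : ℕ} (hg : g ∈ Icc 1 J) :
    (if ∑ w ∈ Icc 1 J, s w = g then 1 else 0 : ℝ)
      = s (J - g + 1) - if J - g = 0 then 0 else s (J - g) := by
  obtain ⟨n, hnJ, hsum, hs⟩ := exists_threshold_of_monotone h01 hmono
  rw [mem_Icc] at hg
  have hs₁ := hs (J - g + 1) (mem_Icc.2 ⟨by omega, by omega⟩)
  by_cases hb : J - g = 0
  · simp only [hsum, Nat.cast_inj, hs₁, if_pos hb, sub_zero]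
    split_ifs <;> first | rfl | (exfalso; omega)
  · simp only [hsum, Nat.cast_inj, hs₁, if_neg hb, hs (J - g) (mem_Icc.2 ⟨by omega, by omega⟩)]
    split_ifs <;> first | (exfalso; omega) | norm_num

lemma indG_apply (S : ℕ → α → ℝ) (g : ℕ) (a : α) :
    indG J S g a = if ∑ w ∈ Icc 1 J, S w a = g then 1 else 0 := by
  simp [indG, Gsum, Set.indicator_apply]

lemma abs_indG_le (S : ℕ → α → ℝ) (g : ℕ) (a : α) : |indG J S g a| ≤ 1 := by
  rw [indG_apply]
  split_ifs <;> norm_num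

lemma abs_indic_le (Z : α → ℕ) (w : ℕ) (a : α) : |indic Z w a| ≤ 1 := by
  unfold indic
  split_ifs <;> norm_num

lemma abs_mul_le_of_abs_le_one {a b C : ℝ} (ha : |a| ≤ C) (hb : |b| ≤ 1) : |a * b| ≤ C := by
  rw [abs_mul]
  exact (mul_le_of_le_one_right (abs_nonneg a) hb).trans ha

variable {Z : α → ℕ}

lemma sum_indic_mul_eq (hZ : ∀ a, Z a ∈ Icc 1 J) (F : ℕ → α → ℝ) (a : α) :
    ∑ w ∈ Icc 1 J, indic Z w a * F w a = F (Z a) a := by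
  rw [sum_eq_single_of_mem (Z a) (hZ a) fun w _ hne => by simp [indic, Ne.symm hne]]
  simp [indic]

lemma indic_mul_sum_indic_mul_eq (hZ : ∀ a, Z a ∈ Icc 1 J) (F : ℕ → α → ℝ) (w : ℕ) (a : α) :
    indic Z w a * ∑ v ∈ Icc 1 J, indic Z v a * F v a = indic Z w a * F w a := by
  rw [sum_indic_mul_eq hZ]
  by_cases h : Z a = w <;> simp [indic, h]

lemma Yobs_mul_Sobs_mul_indic (hZ : ∀ a, Z a ∈ Icc 1 J) (S Y : ℕ → α → ℝ) (z : ℕ) :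
    (fun a => Yobs J Z Y a * Sobs J Z S a * indic Z z a)
      = fun a => indic Z z a * (Y z a * S z a) := by
  ext a
  rw [Yobs, Sobs, sum_indic_mul_eq hZ, sum_indic_mul_eq hZ]
  by_cases h : Z a = z <;> simp [indic, h]

end Pointwise

lemma eq_mul_of_sum_mul_eq {K ι : Type*} [Field K] {s : Finset ι} {a e : ι → K} {m p : K}
    {i : ι} (hp : p ≠ 0) (he : ∑ j ∈ s, e j = p) (ha : ∑ j ∈ s, a j = m * p)
    (hae : ∀ j ∈ s, a i * e j = a j * e i) : a i = m * e i := by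
  apply mul_right_cancel₀ hp
  calc a i * p = ∑ j ∈ s, a i * e j := by rw [← he, mul_sum]
    _ = ∑ j ∈ s, a j * e i := sum_congr rfl hae
    _ = m * e i * p := by rw [← sum_mul, ha]; ring

lemma abs_max_neg_min_le (C t : ℝ) : |max (-C) (min t C)| ≤ |C| :=
  abs_le.2 ⟨(neg_le_neg (le_abs_self C)).trans (le_max_left _ _),
    max_le (neg_le_abs C) ((min_le_right t C).trans (le_abs_self C))⟩

lemma max_neg_min_eq_self {C t : ℝ} (ht : |t| ≤ C) : max (-C) (min t C) = t := by
  rw [abs_le] at ht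
  rw [min_eq_left ht.2, max_eq_right ht.1]

lemma integral_mul_condExp {α : Type*} {m m₀ : MeasurableSpace α} {μ : Measure α}
    (hm : m ≤ m₀) [SigmaFinite (μ.trim hm)] {h f : α → ℝ} (hh : StronglyMeasurable[m] h)
    (hhf : Integrable (h * f) μ) (hf : Integrable f μ) :
    ∫ x, h x * f x ∂μ = ∫ x, h x * μ[f | m] x ∂μ := by
  rw [← integral_condExp hm]
  exact integral_congr_ae (condExp_mul_of_stronglyMeasurable_left hh hhf hf)

lemma measurable_indic {Z : Ω → ℕ} (hZ : Measurable Z) (w : ℕ) : Measurable (indic Z w) :=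
  Measurable.ite (hZ (measurableSet_singleton w)) measurable_const measurable_const

lemma measurable_indG {J : ℕ} {S : ℕ → Ω → ℝ} (hS : ∀ w, Measurable (S w)) (g : ℕ) :
    Measurable (indG J S g) :=
  measurable_const.indicator
    (Finset.measurable_sum _ (fun w _ => hS w) (measurableSet_singleton _))

section Strata

variable {P : Measure Ω} {J : ℕ} {S : ℕ → Ω → ℝ}

lemma Monotonicity.ae_monotone (hmono : Monotonicity P J S) :
    ∀ᵐ ω ∂P, ∀ w ∈ Icc 1 J, ∀ w' ∈ Icc 1 J, w' ≤ w → S w' ω ≤ S w ω := by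
  simp only [Filter.eventually_all_finset, Filter.eventually_imp_distrib_left]
  exact hmono

lemma Monotonicity.sum_indG_ae_eq (hmono : Monotonicity P J S)
    (hS01 : ∀ w ω, S w ω = 0 ∨ S w ω = 1) {z : ℕ} (hz : z ∈ Icc 1 J) :
    ∑ g ∈ Icc (J - z + 1) J, indG J S g =ᵐ[P] S z := by
  filter_upwards [hmono.ae_monotone] with ω hω
  simp only [Finset.sum_apply, indG_apply]
  exact sum_ite_sum_eq_of_monotone (fun w => hS01 w ω) hω hz

lemma Monotonicity.indG_ae_eq_sub (hmono : Monotonicity P J S)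
    (hS01 : ∀ w ω, S w ω = 0 ∨ S w ω = 1) {g : ℕ} (hg : g ∈ Icc 1 J) :
    indG J S g =ᵐ[P] fun ω => S (J - g + 1) ω - if J - g = 0 then 0 else S (J - g) ω := by
  filter_upwards [hmono.ae_monotone] with ω hω
  rw [indG_apply]
  exact ite_sum_eq_sub_of_monotone (fun w => hS01 w ω) hω hg

end Strata

section Identification

variable {P : Measure Ω} {J : ℕ} {X : Ω → 𝒳} {Z : Ω → ℕ} {S Y : ℕ → Ω → ℝ}

lemma pscore_eq_condExp {w : ℕ} (hw : w ≤ J) :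
    pscore P X S J w = P[fun ω => if w = 0 then 0 else S w ω | mX X] := by
  unfold pscore
  split_ifs with h₀ h₁
  · simp
  · omega
  · rfl

lemma pscore_eq_condExp_of_mem {w : ℕ} (hw : w ∈ Icc 1 J) :
    pscore P X S J w = P[S w | mX X] := by
  rw [mem_Icc] at hw
  simp only [pscore, if_neg (show w ≠ 0 by omega), if_neg (show w ≠ J + 1 by omega)]

lemma SetupB.abs_S_le (hset : SetupB P J X Z S Y) (w : ℕ) (ω : Ω) : |S w ω| ≤ 1 := by
  rcases hset.hS01 w ω with h | h <;> norm_num [h]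

/-- Treatment ignorability only asks for globally bounded functionals; clamping at the bound
extends it to every functional that is bounded along the potential values. -/
lemma TreatmentIgnorability.condExp_indic_mul (hTI : TreatmentIgnorability P J X Z S Y)
    {w : ℕ} (hw : w ∈ Icc 1 J) {φ : (ℕ → ℝ) → (ℕ → ℝ) → ℝ}
    (hφ : Measurable (Function.uncurry φ)) {C : ℝ}
    (hC : ∀ ω, |φ (fun v => S v ω) (fun v => Y v ω)| ≤ C) :
    P[fun ω => indic Z w ω * φ (fun v => S v ω) (fun v => Y v ω) | mX X]
      =ᵐ[P] fun ω =>
        piX P X Z w ω * P[fun ω' => φ (fun v => S v ω') (fun v => Y v ω') | mX X] ω := by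
  have key := hTI.2 w hw (fun s y => max (-C) (min (φ s y) C))
    (measurable_const.max (hφ.min measurable_const)) ⟨|C|, fun s y => abs_max_neg_min_le C _⟩
  simpa only [max_neg_min_eq_self (hC _)] using key

lemma TreatmentIgnorability.ae_norm_div_piX_le (hTI : TreatmentIgnorability P J X Z S Y)
    {w : ℕ} (hw : w ∈ Icc 1 J) {m : Ω → ℝ} {C : ℝ} (hmC : ∀ᵐ ω ∂P, |m ω| ≤ C) :
    ∃ C', ∀ᵐ ω ∂P, ‖m ω / piX P X Z w ω‖ ≤ C' := by
  obtain ⟨c, hc, hπ⟩ := hTI.1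
  refine ⟨C / c, ?_⟩
  filter_upwards [hmC, hπ w hw] with ω hm hπω
  rw [Real.norm_eq_abs, abs_div, abs_of_pos (hc.trans_le hπω)]
  exact div_le_div₀ ((abs_nonneg _).trans hm) hm hc hπω

lemma ipw_mul_eq (hset : SetupB P J X Z S Y) (w : ℕ) (m : Ω → ℝ) :
    (fun ω => indic Z w ω * Sobs J Z S ω / piX P X Z w ω * m ω)
      = fun ω => m ω / piX P X Z w ω * (indic Z w ω * S w ω) := by
  ext ω
  rw [Sobs, indic_mul_sum_indic_mul_eq hset.hZr]
  ring

lemma integrable_mul_pscore (hset : SetupB P J X Z S Y) {w : ℕ} (hw : w ≤ J) {m : Ω → ℝ}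
    (hm : Measurable[mX X] m) {C : ℝ} (hmC : ∀ᵐ ω ∂P, |m ω| ≤ C) :
    Integrable (fun ω => m ω * pscore P X S J w ω) P := by
  rw [pscore_eq_condExp hw]
  exact integrable_condExp.bdd_mul (hm.mono hset.hX.comap_le le_rfl).aestronglyMeasurable
    (by simpa only [Real.norm_eq_abs] using hmC)

lemma condExp_Y_mul_S_ae_eq (hset : SetupB P J X Z S Y)
    (hTI : TreatmentIgnorability P J X Z S Y)
    {z : ℕ} (hz : z ∈ Icc 1 J) {m : Ω → ℝ}
    (hmz : (fun ω => m ω * piX P X Z z ω * pscore P X S J z ω)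
      =ᵐ[P] P[fun ω => Yobs J Z Y ω * Sobs J Z S ω * indic Z z ω | mX X]) :
    (fun ω => m ω * pscore P X S J z ω) =ᵐ[P] P[fun ω => Y z ω * S z ω | mX X] := by
  obtain ⟨c, hc, hπ⟩ := hTI.1
  obtain ⟨C, hC⟩ := hset.hYbd
  have hfac := hTI.condExp_indic_mul hz (φ := fun s y => y z * s z) (by fun_prop)
    fun ω => abs_mul_le_of_abs_le_one (hC z ω) (hset.abs_S_le z ω)
  rw [Yobs_mul_Sobs_mul_indic hset.hZr] at hmz
  filter_upwards [hmz, hfac, hπ z hz] with ω h₁ h₂ hπω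
  apply mul_left_cancel₀ (hc.trans_le hπω).ne'
  linear_combination h₁ + h₂

lemma ae_abs_le_of_mul_pscore_ae_eq (hset : SetupB P J X Z S Y) (hpos : Positivity P J X S)
    {z : ℕ} (hz : z ∈ Icc 1 J) {m : Ω → ℝ}
    (hD : (fun ω => m ω * pscore P X S J z ω) =ᵐ[P] P[fun ω => Y z ω * S z ω | mX X]) :
    ∃ C, ∀ᵐ ω ∂P, |m ω| ≤ C := by
  obtain ⟨c, hc, hp⟩ := hpos
  obtain ⟨C, hC⟩ := hset.hYbd
  have hbd : ∀ᵐ ω ∂P, |P[fun ω => Y z ω * S z ω | mX X] ω| ≤ C :=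
    ae_bdd_abs_condExp_of_ae_bdd_abs
      (ae_of_all _ fun ω => abs_mul_le_of_abs_le_one (hC z ω) (hset.abs_S_le z ω))
  refine ⟨C / c, ?_⟩
  filter_upwards [hD, hbd, hp z hz] with ω hDω hbdω hpω
  rw [le_div_iff₀ hc]
  calc |m ω| * c ≤ |m ω| * pscore P X S J z ω := mul_le_mul_of_nonneg_left hpω (abs_nonneg _)
    _ = |m ω * pscore P X S J z ω| := by rw [abs_mul, abs_of_pos (hc.trans_le hpω)]
    _ ≤ C := hDω ▸ hbdω

variable [IsProbabilityMeasure P]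

lemma SetupB.integrable_indic_mul_S (hset : SetupB P J X Z S Y) (w : ℕ) :
    Integrable (fun ω => indic Z w ω * S w ω) P :=
  .of_bound ((measurable_indic hset.hZ w).mul (hset.hSm w)).aestronglyMeasurable 1
    (ae_of_all _ fun ω => abs_mul_le_of_abs_le_one (abs_indic_le Z w ω) (hset.abs_S_le w ω))

lemma integrable_ipw_mul (hset : SetupB P J X Z S Y) (hTI : TreatmentIgnorability P J X Z S Y)
    {w : ℕ} (hw : w ∈ Icc 1 J) {m : Ω → ℝ} (hm : Measurable[mX X] m) {C : ℝ}
    (hmC : ∀ᵐ ω ∂P, |m ω| ≤ C) :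
    Integrable (fun ω => indic Z w ω * Sobs J Z S ω / piX P X Z w ω * m ω) P := by
  obtain ⟨C', hC'⟩ := hTI.ae_norm_div_piX_le hw hmC
  have hmeas : Measurable[mX X] fun ω => m ω / piX P X Z w ω :=
    hm.div stronglyMeasurable_condExp.measurable
  rw [ipw_mul_eq hset]
  exact (hset.integrable_indic_mul_S w).bdd_mul
    (hmeas.mono hset.hX.comap_le le_rfl).aestronglyMeasurable hC'

/-- Inverse probability weighting: on `{Z = w}` the observed survival is `S_w`, and reweighting
by `1 / π_w(X)` undoes the selection into arm `w`. -/
lemma integral_ipw_mul (hset : SetupB P J X Z S Y) (hTI : TreatmentIgnorability P J X Z S Y)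
    {w : ℕ} (hw : w ∈ Icc 1 J) {m : Ω → ℝ} (hm : Measurable[mX X] m) {C : ℝ}
    (hmC : ∀ᵐ ω ∂P, |m ω| ≤ C) :
    ∫ ω, indic Z w ω * Sobs J Z S ω / piX P X Z w ω * m ω ∂P
      = ∫ ω, m ω * pscore P X S J w ω ∂P := by
  obtain ⟨c, hc, hπ⟩ := hTI.1
  have hmX : mX X ≤ ‹MeasurableSpace Ω› := hset.hX.comap_le
  have hint := integrable_ipw_mul hset hTI hw hm hmC
  rw [ipw_mul_eq hset] at hint ⊢
  have hfac : P[fun ω => indic Z w ω * S w ω | mX X]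
      =ᵐ[P] fun ω => piX P X Z w ω * P[S w | mX X] ω :=
    hTI.condExp_indic_mul hw (φ := fun s _ => s w) (by fun_prop) (hset.abs_S_le w)
  rw [integral_mul_condExp (h := fun ω => m ω / piX P X Z w ω) hmX
    (hm.div stronglyMeasurable_condExp.measurable).stronglyMeasurable hint
    (hset.integrable_indic_mul_S w)]
  refine integral_congr_ae ?_
  filter_upwards [hfac, hπ w hw] with ω hfacω hπω
  rw [hfacω, pscore_eq_condExp_of_mem hw]
  field_simp [(hc.trans_le hπω).ne']

lemma SetupB.integrable_S (hset : SetupB P J X Z S Y) (w : ℕ) : Integrable (S w) P :=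
  .of_bound (hset.hSm w).aestronglyMeasurable 1 (ae_of_all _ (hset.abs_S_le w))

lemma integrable_ipw_ite_mul (hset : SetupB P J X Z S Y) (hTI : TreatmentIgnorability P J X Z S Y)
    {w : ℕ} (hw : w ≤ J) {m : Ω → ℝ} (hm : Measurable[mX X] m) {C : ℝ}
    (hmC : ∀ᵐ ω ∂P, |m ω| ≤ C) :
    Integrable (fun ω =>
      (if w = 0 then 0 else indic Z w ω * Sobs J Z S ω / piX P X Z w ω) * m ω) P := by
  rcases Nat.eq_zero_or_pos w with rfl | hw₀
  · simp
  · simpa [hw₀.ne'] using integrable_ipw_mul hset hTI (mem_Icc.2 ⟨hw₀, hw⟩) hm hmC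

lemma integral_ipw_ite_mul (hset : SetupB P J X Z S Y) (hTI : TreatmentIgnorability P J X Z S Y)
    {w : ℕ} (hw : w ≤ J) {m : Ω → ℝ} (hm : Measurable[mX X] m) {C : ℝ}
    (hmC : ∀ᵐ ω ∂P, |m ω| ≤ C) :
    ∫ ω, (if w = 0 then 0 else indic Z w ω * Sobs J Z S ω / piX P X Z w ω) * m ω ∂P
      = ∫ ω, m ω * pscore P X S J w ω ∂P := by
  rcases Nat.eq_zero_or_pos w with rfl | hw₀
  · simp [pscore]
  · simpa [hw₀.ne'] using integral_ipw_mul hset hTI (mem_Icc.2 ⟨hw₀, hw⟩) hm hmC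

/-- Principal ignorability makes `E[Y_z 1(G = g) | X] / e_g(X)` the same for all strata `g`
that survive under `z`; summing over these strata identifies the common value as `m_z(X)`. -/
lemma condExp_Y_mul_indG_ae_eq (hset : SetupB P J X Z S Y) (hmono : Monotonicity P J S)
    (hPI : PrincipalIgnorability P J X S Y) (hpos : Positivity P J X S) {z g : ℕ}
    (hz : z ∈ Icc 1 J) (hg : g ∈ Icc (J - z + 1) J) {m : Ω → ℝ}
    (hD : (fun ω => m ω * pscore P X S J z ω) =ᵐ[P] P[fun ω => Y z ω * S z ω | mX X]) :
    P[fun ω => Y z ω * indG J S g ω | mX X] =ᵐ[P] fun ω => m ω * eg P X J S g ω := by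
  obtain ⟨c, hc, hp⟩ := hpos
  obtain ⟨C, hC⟩ := hset.hYbd
  have hstrata := hmono.sum_indG_ae_eq (P := P) hset.hS01 hz
  have hindG : ∀ g', Integrable (indG J S g') P := fun g' =>
    .of_bound (measurable_indG hset.hSm g').aestronglyMeasurable 1
      (ae_of_all _ (abs_indG_le S g'))
  have hYindG : ∀ g', Integrable (fun ω => Y z ω * indG J S g' ω) P := fun g' =>
    .of_bound ((hset.hYm z).mul (measurable_indG hset.hSm g')).aestronglyMeasurable C
      (ae_of_all _ fun ω => abs_mul_le_of_abs_le_one (hC z ω) (abs_indG_le S g' ω))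
  have he : ∑ g' ∈ Icc (J - z + 1) J, eg P X J S g' =ᵐ[P] pscore P X S J z := by
    rw [pscore_eq_condExp_of_mem hz]
    exact (condExp_finsetSum (fun g' _ => hindG g') _).symm.trans (condExp_congr_ae hstrata)
  have ha : ∑ g' ∈ Icc (J - z + 1) J, P[fun ω => Y z ω * indG J S g' ω | mX X]
      =ᵐ[P] P[fun ω => Y z ω * S z ω | mX X] := by
    refine (condExp_finsetSum (fun g' _ => hYindG g') _).symm.trans (condExp_congr_ae ?_)
    filter_upwards [hstrata] with ω hω
    simp only [Finset.sum_apply] at hω ⊢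
    rw [← mul_sum, hω]
  have hcross := (Filter.eventually_all_finset (Icc (J - z + 1) J)).2 (hPI z hz g hg)
  filter_upwards [he, ha, hcross, hD, hp z hz] with ω heω haω hcrossω hDω hpω
  simp only [Finset.sum_apply] at heω haω
  exact eq_mul_of_sum_mul_eq (a := fun j => P[fun ω => Y z ω * indG J S j ω | mX X] ω)
    (e := fun j => eg P X J S j ω) (hc.trans_le hpω).ne' heω (haω.trans hDω.symm) hcrossω

lemma eg_ae_eq_pscore_sub (hset : SetupB P J X Z S Y) (hmono : Monotonicity P J S) {g : ℕ}
    (hg : g ∈ Icc 1 J) :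
    eg P X J S g =ᵐ[P] pscore P X S J (J - g + 1) - pscore P X S J (J - g) := by
  have hg' := mem_Icc.1 hg
  rw [pscore_eq_condExp (by omega : J - g + 1 ≤ J), pscore_eq_condExp (by omega : J - g ≤ J)]
  simp only [Nat.add_one_ne_zero, ↓reduceIte]
  refine (condExp_congr_ae (hmono.indG_ae_eq_sub hset.hS01 hg)).trans
    (condExp_sub (hset.integrable_S _) ?_ _)
  by_cases hb : J - g = 0 <;> simp [hb, hset.integrable_S]

end Identification

/-- **observational outcome-regression identification.** Under treatment
ignorability, monotonicity, principal ignorability and positivity, for every `z ∈ {1,…,J}`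
and `g ∈ {J−z+1,…,J}`:
`E[Y_z·1(G=g)] = E[(1(Z=J−g+1)·S/π_{J−g+1}(X) − 1(Z=J−g)·S/π_{J−g}(X)) · m_z(X)]`,
where for `g = J` the subtracted term is taken to be `0`. -/
theorem statement15 (P : Measure Ω) [IsProbabilityMeasure P] (J : ℕ)
    (X : Ω → 𝒳) (Z : Ω → ℕ) (S Y : ℕ → Ω → ℝ)
    (hset : SetupB P J X Z S Y)
    (hTI : TreatmentIgnorability P J X Z S Y)
    (hmono : Monotonicity P J S)
    (hPI : PrincipalIgnorability P J X S Y)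
    (hpos : Positivity P J X S) :
    ∀ z ∈ Finset.Icc 1 J, ∀ g ∈ Finset.Icc (J - z + 1) J,
      ∀ mz : Ω → ℝ, Measurable[mX X] mz →
      ((fun ω => mz ω * piX P X Z z ω * pscore P X S J z ω)
        =ᵐ[P] P[fun ω => Yobs J Z Y ω * Sobs J Z S ω * indic Z z ω | mX X]) →
      ∫ ω, Y z ω * indG J S g ω ∂P
        = ∫ ω,
            (indic Z (J - g + 1) ω * Sobs J Z S ω / piX P X Z (J - g + 1) ω
              - (if J - g = 0 then 0
                else indic Z (J - g) ω * Sobs J Z S ω / piX P X Z (J - g) ω)) * mz ω ∂P := by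
  intro z hz g hg m hm hmz
  have hg₁ : g ∈ Icc 1 J := by grind
  have ha : J - g + 1 ∈ Icc 1 J := by grind
  have hb : J - g ≤ J := Nat.sub_le J g
  have hD := condExp_Y_mul_S_ae_eq hset hTI hz hmz
  obtain ⟨C, hC⟩ := ae_abs_le_of_mul_pscore_ae_eq hset hpos hz hD
  calc ∫ ω, Y z ω * indG J S g ω ∂P = ∫ ω, m ω * eg P X J S g ω ∂P := by
        rw [← integral_condExp hset.hX.comap_le]
        exact integral_congr_ae (condExp_Y_mul_indG_ae_eq hset hmono hPI hpos hz hg hD)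
    _ = ∫ ω, m ω * pscore P X S J (J - g + 1) ω - m ω * pscore P X S J (J - g) ω ∂P := by
        refine integral_congr_ae ?_
        filter_upwards [eg_ae_eq_pscore_sub hset hmono hg₁] with ω hω
        rw [hω, Pi.sub_apply, mul_sub]
    _ = ∫ ω, m ω * pscore P X S J (J - g + 1) ω ∂P - ∫ ω, m ω * pscore P X S J (J - g) ω ∂P :=
        integral_sub (integrable_mul_pscore hset (mem_Icc.1 ha).2 hm hC)
          (integrable_mul_pscore hset hb hm hC)
    _ = _ := by
        rw [← integral_ipw_mul hset hTI ha hm hC, ← integral_ipw_ite_mul hset hTI hb hm hC,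
          ← integral_sub (integrable_ipw_mul hset hTI ha hm hC)
            (integrable_ipw_ite_mul hset hTI hb hm hC)]
        simp_rw [sub_mul]

end TruncationByDeath
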